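/- Let X and Y be independent real random variables on a probability space such that X is Gamma-distributed with shape a > 0 and scale θ₁ > 0 and Y is Gamma-distributed with shape b > 0 and scale θ₂ > 0, let c > 0 be a real constant, and let λ > 0. Then P(cX/Y < λ) = (Γ(a+b)/(Γ(a)Γ(b))) · ∫₀^ψ t^{a−1}(1−t)^{b−1} dt, where ψ = λθ₂/(cθ₁ + λθ₂); i.e., the outage probability equals the regularized incomplete Beta function evaluated at ψ. -/

import Mathlib

/-!
Condition on `Y = y`: with `s = λ / c`, the probability is `∫ g(y) F(s y) dy`, where `g` is the
density of `Y` and `F` the distribution function of `X`. In the inner integral substitute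
`x = (θ₁ y / θ₂) · t / (1 - t)`, i.e. `t = U / (U + V)` with `U = X / θ₁`, `V = Y / θ₂`; the event
becomes `t < ψ` and the two exponentials merge into `exp (-y / ((1 - t) θ₂))`. After exchanging
the integrals, the `y`-integral is a Gamma integral equal to `Γ(a + b) ((1 - t) θ₂) ^ (a + b)`,
which leaves `Γ(a + b) / (Γ(a) Γ(b)) · t ^ (a - 1) (1 - t) ^ (b - 1)` as the density of `t`.
-/

open MeasureTheory ProbabilityTheory

/-- Density of a Gamma distribution with shape `k > 0` and scale `θ > 0`. -/
noncomputable def gammaDensity (k θ : ℝ) (x : ℝ) : ENNReal :=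
  if 0 < x then ENNReal.ofReal (x ^ (k - 1) * Real.exp (-x / θ) / (θ ^ k * Real.Gamma k)) else 0

open Real Set

lemma measurable_gammaDensity (k θ : ℝ) : Measurable (gammaDensity k θ) :=
  Measurable.ite measurableSet_Ioi (by fun_prop) measurable_const

lemma gammaDensity_ne_top (k θ x : ℝ) : gammaDensity k θ x ≠ ⊤ := by
  unfold gammaDensity; split <;> simp

lemma gammaDensity_of_pos {k θ x : ℝ} (hx : 0 < x) :
    gammaDensity k θ x = ENNReal.ofReal (x ^ (k - 1) * exp (-x / θ) / (θ ^ k * Gamma k)) :=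
  if_pos hx

lemma restrict_Ioi_withDensity_gammaDensity (k θ : ℝ) :
    (volume.withDensity (gammaDensity k θ)).restrict (Ioi 0) =
      volume.withDensity (gammaDensity k θ) := by
  refine Measure.restrict_eq_self_of_ae_mem ?_
  rw [ae_withDensity_iff (measurable_gammaDensity k θ)]
  refine Filter.Eventually.of_forall fun x hx => ?_
  by_contra h
  exact hx (if_neg h)

lemma lintegral_Ioi_rpow_mul_exp_neg_mul {k r : ℝ} (hk : 0 < k) (hr : 0 < r) :
    ∫⁻ y in Ioi (0:ℝ), ENNReal.ofReal (y ^ (k - 1) * exp (-(r * y))) =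
      ENNReal.ofReal ((1 / r) ^ k * Gamma k) := by
  have hint : IntegrableOn (fun y : ℝ => y ^ (k - 1) * exp (-(r * y))) (Ioi 0) := by
    simpa only [rpow_one, neg_mul] using
      integrableOn_rpow_mul_exp_neg_mul_rpow (s := k - 1) (p := 1) (by linarith) one_pos hr
  rw [← integral_rpow_mul_exp_neg_mul_Ioi hk hr, ofReal_integral_eq_lintegral_ofReal hint]
  filter_upwards [ae_restrict_mem measurableSet_Ioi] with y (hy : 0 < y)
  positivity

lemma prod_setOf_mul_div_lt {μ ν : Measure ℝ} [SFinite μ] [SFinite ν]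
    (hν : ν.restrict (Ioi 0) = ν) {c lam : ℝ} (hc : 0 < c) :
    μ.prod ν {p | c * p.1 / p.2 < lam} = ∫⁻ y in Ioi 0, μ (Iio (lam / c * y)) ∂ν := by
  rw [Measure.prod_apply_symm (measurableSet_lt (by fun_prop) measurable_const)]
  conv_lhs => rw [← hν]
  refine setLIntegral_congr_fun measurableSet_Ioi fun y (hy : 0 < y) => congrArg μ ?_
  ext x
  simp only [mem_preimage, mem_ofPred_eq, mem_Iio]
  rw [div_lt_iff₀ hy, ← lt_div_iff₀' hc]
  ring_nf

lemma image_mul_div_one_sub_Ioo {K ψ : ℝ} (hK : 0 < K) (hψ : ψ < 1) :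
    (fun t => K * (t / (1 - t))) '' Ioo 0 ψ = Ioo 0 (K * (ψ / (1 - ψ))) := by
  have h1ψ : 0 < 1 - ψ := by linarith
  ext x
  constructor
  · rintro ⟨t, ⟨ht0, htψ⟩, rfl⟩
    have h1t : 0 < 1 - t := by linarith
    refine ⟨by positivity, mul_lt_mul_of_pos_left ?_ hK⟩
    rw [div_lt_div_iff₀ h1t h1ψ]
    nlinarith
  · rintro ⟨hx0, hxψ⟩
    have hxK : 0 < x + K := by positivity
    refine ⟨x / (x + K), ⟨by positivity, ?_⟩, ?_⟩
    · rw [mul_div_assoc', lt_div_iff₀ h1ψ] at hxψ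
      rw [div_lt_iff₀ hxK]
      nlinarith
    · have h1 : 1 - x / (x + K) = K / (x + K) := by field_simp; ring
      simp only [h1]
      field_simp

lemma injOn_mul_div_one_sub {K : ℝ} (hK : K ≠ 0) :
    InjOn (fun t => K * (t / (1 - t))) (Iio 1) := by
  rintro t₁ (h₁ : t₁ < 1) t₂ (h₂ : t₂ < 1) h
  have e₁ : 1 - t₁ ≠ 0 := by linarith
  have e₂ : 1 - t₂ ≠ 0 := by linarith
  have := mul_left_cancel₀ hK h
  field_simp at this
  linarith

lemma hasDerivAt_mul_div_one_sub (K : ℝ) {t : ℝ} (ht : t ≠ 1) :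
    HasDerivAt (fun t => K * (t / (1 - t))) (K / (1 - t) ^ 2) t := by
  have h1t : 1 - t ≠ 0 := sub_ne_zero.2 ht.symm
  have h := ((hasDerivAt_id' t).div ((hasDerivAt_id' t).const_sub 1) h1t).const_mul K
  exact h.congr_deriv (by field_simp; ring)

/-- Joint density of `T = U / (U + V)` and `Y`, where `U = X / θ₁` and `V = Y / θ₂`. -/
noncomputable def jointDensity (a b θ₂ t y : ℝ) : ℝ :=
  t ^ (a - 1) * (1 - t) ^ (b - 1) / (Gamma a * Gamma b * ((1 - t) * θ₂) ^ (a + b)) *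
    (y ^ (a + b - 1) * exp (-(1 / ((1 - t) * θ₂) * y)))

lemma measurable_jointDensity_uncurry (a b θ₂ : ℝ) :
    Measurable fun p : ℝ × ℝ => jointDensity a b θ₂ p.2 p.1 := by
  unfold jointDensity
  fun_prop

lemma gammaDensity_mul_deriv_mul_gammaDensity {a θ₁ b θ₂ y t : ℝ} (ha : 0 < a) (hθ₁ : 0 < θ₁)
    (hb : 0 < b) (hθ₂ : 0 < θ₂) (hy : 0 < y) (ht0 : 0 < t) (ht1 : t < 1) :
    gammaDensity b θ₂ y * (ENNReal.ofReal |θ₁ / θ₂ * y / (1 - t) ^ 2| *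
      gammaDensity a θ₁ (θ₁ / θ₂ * y * (t / (1 - t)))) =
    ENNReal.ofReal (jointDensity a b θ₂ t y) := by
  have h1t : 0 < 1 - t := by linarith
  have hΓa := Gamma_pos_of_pos ha
  have hΓb := Gamma_pos_of_pos hb
  have hx : 0 < θ₁ / θ₂ * y * (t / (1 - t)) := by positivity
  rw [gammaDensity_of_pos hy, gammaDensity_of_pos hx, abs_of_pos (by positivity),
    ← ENNReal.ofReal_mul (by positivity), ← ENNReal.ofReal_mul (by positivity)]
  congr 1
  have hexp : exp (-(1 / ((1 - t) * θ₂) * y)) =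
      exp (-y / θ₂) * exp (-(θ₁ / θ₂ * y * (t / (1 - t))) / θ₁) := by
    rw [← exp_add]
    congr 1
    field_simp
    ring
  have pow_sub_one : ∀ {u : ℝ} (k : ℝ), 0 < u → u ^ k = u ^ (k - 1) * u := fun k hu => by
    rw [← rpow_add_one hu.ne', sub_add_cancel]
  have pow_add : ∀ {u : ℝ}, 0 < u → u ^ (a + b) = u ^ (a - 1) * u ^ (b - 1) * (u * u) :=
      fun hu => by
    rw [show a + b = (a - 1) + ((b - 1) + (1 + 1)) by ring, rpow_add hu, rpow_add hu, rpow_add hu,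
      rpow_one]
    ring
  have hy_pow : y ^ (a + b - 1) = y ^ (a - 1) * y ^ (b - 1) * y := by
    rw [show a + b - 1 = (a - 1) + ((b - 1) + 1) by ring, rpow_add hy, rpow_add hy, rpow_one]
    ring
  unfold jointDensity
  rw [hexp, hy_pow, mul_rpow (by positivity) (by positivity),
    mul_rpow (by positivity) (by positivity), div_rpow hθ₁.le hθ₂.le,
    div_rpow ht0.le h1t.le, mul_rpow h1t.le hθ₂.le,
    pow_add h1t, pow_add hθ₂, pow_sub_one a hθ₁, pow_sub_one b hθ₂]
  field_simp

lemma lintegral_Ioi_jointDensity {a b θ₂ t : ℝ} (ha : 0 < a) (hb : 0 < b) (hθ₂ : 0 < θ₂)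
    (ht0 : 0 < t) (ht1 : t < 1) :
    ∫⁻ y in Ioi 0, ENNReal.ofReal (jointDensity a b θ₂ t y) =
      ENNReal.ofReal (Gamma (a + b) / (Gamma a * Gamma b) * (t ^ (a - 1) * (1 - t) ^ (b - 1))) := by
  have h1t : 0 < 1 - t := by linarith
  have hΓa := Gamma_pos_of_pos ha
  have hΓb := Gamma_pos_of_pos hb
  have hscale : 0 < ((1 - t) * θ₂) ^ (a + b) := rpow_pos_of_pos (by positivity) _
  unfold jointDensity
  simp_rw [ENNReal.ofReal_mul (by positivity : 0 ≤ t ^ (a - 1) * (1 - t) ^ (b - 1) /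
    (Gamma a * Gamma b * ((1 - t) * θ₂) ^ (a + b)))]
  rw [lintegral_const_mul' _ _ ENNReal.ofReal_ne_top,
    lintegral_Ioi_rpow_mul_exp_neg_mul (by linarith) (by positivity),
    ← ENNReal.ofReal_mul (by positivity), one_div_one_div]
  congr 1
  field_simp

lemma gammaDensity_mul_lintegral_Ioo {a θ₁ b θ₂ y ψ : ℝ} (ha : 0 < a) (hθ₁ : 0 < θ₁)
    (hb : 0 < b) (hθ₂ : 0 < θ₂) (hy : 0 < y) (hψ : ψ < 1) :
    gammaDensity b θ₂ y * ∫⁻ x in Ioo 0 (θ₁ / θ₂ * y * (ψ / (1 - ψ))), gammaDensity a θ₁ x =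
      ∫⁻ t in Ioo 0 ψ, ENNReal.ofReal (jointDensity a b θ₂ t y) := by
  have hK : 0 < θ₁ / θ₂ * y := by positivity
  have hsub : Ioo 0 ψ ⊆ Iio 1 := fun t ht => ht.2.trans hψ
  rw [← image_mul_div_one_sub_Ioo hK hψ,
    lintegral_image_eq_lintegral_abs_deriv_mul measurableSet_Ioo
      (fun t ht => (hasDerivAt_mul_div_one_sub _ (hsub ht).ne).hasDerivWithinAt)
      ((injOn_mul_div_one_sub hK.ne').mono hsub),
    ← lintegral_const_mul' _ _ (gammaDensity_ne_top b θ₂ y)]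
  exact setLIntegral_congr_fun measurableSet_Ioo fun t ht =>
    gammaDensity_mul_deriv_mul_gammaDensity ha hθ₁ hb hθ₂ hy ht.1 (hsub ht)

lemma lintegral_gammaDensity_mul_lintegral_Ioo {a θ₁ b θ₂ s : ℝ} (ha : 0 < a) (hθ₁ : 0 < θ₁)
    (hb : 0 < b) (hθ₂ : 0 < θ₂) (hs : 0 < s) :
    ∫⁻ y in Ioi 0, gammaDensity b θ₂ y * ∫⁻ x in Ioo 0 (s * y), gammaDensity a θ₁ x =
      ∫⁻ t in Ioo 0 (s * θ₂ / (θ₁ + s * θ₂)),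
        ENNReal.ofReal
          (Gamma (a + b) / (Gamma a * Gamma b) * (t ^ (a - 1) * (1 - t) ^ (b - 1))) := by
  set ψ := s * θ₂ / (θ₁ + s * θ₂) with hψ_def
  have hψ : ψ < 1 := by rw [div_lt_one (by positivity)]; linarith
  have hsy : ∀ y, s * y = θ₁ / θ₂ * y * (ψ / (1 - ψ)) := fun y => by
    have h1ψ : 1 - ψ = θ₁ / (θ₁ + s * θ₂) := by rw [hψ_def]; field_simp; ring
    rw [h1ψ, hψ_def]
    field_simp
  calc ∫⁻ y in Ioi 0, gammaDensity b θ₂ y * ∫⁻ x in Ioo 0 (s * y), gammaDensity a θ₁ x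
      = ∫⁻ y in Ioi 0, ∫⁻ t in Ioo 0 ψ, ENNReal.ofReal (jointDensity a b θ₂ t y) :=
        setLIntegral_congr_fun measurableSet_Ioi fun y hy => by
          rw [hsy]; exact gammaDensity_mul_lintegral_Ioo ha hθ₁ hb hθ₂ hy hψ
    _ = ∫⁻ t in Ioo 0 ψ, ∫⁻ y in Ioi 0, ENNReal.ofReal (jointDensity a b θ₂ t y) :=
        lintegral_lintegral_swap
          (measurable_jointDensity_uncurry a b θ₂).ennreal_ofReal.aemeasurable
    _ = _ := setLIntegral_congr_fun measurableSet_Ioo fun t ht =>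
        lintegral_Ioi_jointDensity ha hb hθ₂ ht.1 (ht.2.trans hψ)

lemma withDensity_gammaDensity_Iio (k θ z : ℝ) :
    volume.withDensity (gammaDensity k θ) (Iio z) = ∫⁻ x in Ioo 0 z, gammaDensity k θ x := by
  rw [← restrict_Ioi_withDensity_gammaDensity, Measure.restrict_apply measurableSet_Iio,
    Iio_inter_Ioi, withDensity_apply _ measurableSet_Ioo]

lemma toReal_setLIntegral_Ioo_ofReal {f : ℝ → ℝ} (hf : Measurable f) {u v : ℝ} (huv : u ≤ v)
    (hf_nonneg : ∀ t ∈ Ioo u v, 0 ≤ f t) :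
    (∫⁻ t in Ioo u v, ENNReal.ofReal (f t)).toReal = ∫ t in u..v, f t := by
  rw [intervalIntegral.integral_of_le huv, integral_Ioc_eq_integral_Ioo,
    integral_eq_lintegral_of_nonneg_ae
      ((ae_restrict_iff' measurableSet_Ioo).2 (.of_forall hf_nonneg)) hf.aestronglyMeasurable]

lemma prod_withDensity_gammaDensity_setOf_mul_div_lt {a θ₁ b θ₂ c lam : ℝ} (ha : 0 < a)
    (hθ₁ : 0 < θ₁) (hb : 0 < b) (hθ₂ : 0 < θ₂) (hc : 0 < c) (hlam : 0 < lam) :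
    (volume.withDensity (gammaDensity a θ₁)).prod (volume.withDensity (gammaDensity b θ₂))
        {p | c * p.1 / p.2 < lam} =
      ∫⁻ t in Ioo 0 (lam * θ₂ / (c * θ₁ + lam * θ₂)),
        ENNReal.ofReal
          (Gamma (a + b) / (Gamma a * Gamma b) * (t ^ (a - 1) * (1 - t) ^ (b - 1))) := by
  have hψ : lam / c * θ₂ / (θ₁ + lam / c * θ₂) = lam * θ₂ / (c * θ₁ + lam * θ₂) := by
    field_simp
  rw [← hψ, ← lintegral_gammaDensity_mul_lintegral_Ioo ha hθ₁ hb hθ₂ (div_pos hlam hc),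
    prod_setOf_mul_div_lt (restrict_Ioi_withDensity_gammaDensity b θ₂) hc,
    setLIntegral_withDensity_eq_setLIntegral_mul_non_measurable₀' _ _
      (measurable_gammaDensity b θ₂).aemeasurable _
      (.of_forall fun y => (gammaDensity_ne_top b θ₂ y).lt_top)]
  simp only [Pi.mul_apply, withDensity_gammaDensity_Iio]

/-- The outage probability `P(cX/Y < λ)` for independent Gamma random variables equals the
regularized incomplete Beta function evaluated at `ψ = λθ₂/(cθ₁ + λθ₂)`. -/
theorem stmt1 {α : Type*} [MeasureSpace α] [IsProbabilityMeasure (ℙ : Measure α)]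
    (X Y : α → ℝ) (hX : Measurable X) (hY : Measurable Y)
    (hindep : IndepFun X Y)
    (a θ₁ b θ₂ c lam : ℝ) (ha : 0 < a) (hθ₁ : 0 < θ₁) (hb : 0 < b) (hθ₂ : 0 < θ₂)
    (hc : 0 < c) (hlam : 0 < lam)
    (hXlaw : Measure.map X ℙ = volume.withDensity (gammaDensity a θ₁))
    (hYlaw : Measure.map Y ℙ = volume.withDensity (gammaDensity b θ₂)) :
    (ℙ {ω | c * X ω / Y ω < lam}).toReal =
      (Real.Gamma (a + b) / (Real.Gamma a * Real.Gamma b)) *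
        ∫ t in (0:ℝ)..(lam * θ₂ / (c * θ₁ + lam * θ₂)), t ^ (a - 1) * (1 - t) ^ (b - 1) := by
  have hlaw : Measure.map (fun ω => (X ω, Y ω)) ℙ =
      (volume.withDensity (gammaDensity a θ₁)).prod (volume.withDensity (gammaDensity b θ₂)) := by
    rw [← hXlaw, ← hYlaw]
    exact (indepFun_iff_map_prod_eq_prod_map_map hX.aemeasurable hY.aemeasurable).1 hindep
  have hP : ℙ {ω | c * X ω / Y ω < lam} = Measure.map (fun ω => (X ω, Y ω)) ℙ
      {p | c * p.1 / p.2 < lam} :=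
    (Measure.map_apply (hX.prodMk hY)
      (measurableSet_lt (f := fun p : ℝ × ℝ => c * p.1 / p.2) (by fun_prop)
        measurable_const)).symm
  have hψ1 : lam * θ₂ / (c * θ₁ + lam * θ₂) < 1 := by
    rw [div_lt_one (by positivity)]
    linarith [mul_pos hc hθ₁]
  rw [hP, hlaw, prod_withDensity_gammaDensity_setOf_mul_div_lt ha hθ₁ hb hθ₂ hc hlam,
    toReal_setLIntegral_Ioo_ofReal (by fun_prop) (by positivity) fun t ht => ?_,
    intervalIntegral.integral_const_mul]
  have ht0 := ht.1
  have h1t : 0 < 1 - t := by linarith [ht.2]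
  have := Gamma_pos_of_pos ha
  have := Gamma_pos_of_pos hb
  have := Gamma_pos_of_pos (add_pos ha hb)
  positivity
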